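/- arXiv:1312.7686 — 4 statements merged into one kernel-verified Lean document; each statement's English description precedes it below -/
import Mathlib

section
/- Let k be a field and V a two-dimensional k-vector space with basis {a, b}. Let θ : V ⊗ V → V be a bilinear multiplication (written xy) that is commutative (xy = yx for all x, y ∈ V) and satisfies a·a = b and b·b = a. Then (V, θ) satisfies the Jordan identity ((x·x)·y)·x = (x·x)·(y·x) for all x, y ∈ V if and only if θ is associative, i.e. (x·y)·z = x·(y·z) for all x, y, z ∈ V. -/
/-!
Write `a = B 0`, `b = B 1`. Evaluating the Jordan identity at `x = y = a` and at `x = y = b`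
gives `(ab)a = a` and `(ab)b = b`, so `ab` is a unit element. The multiplication table is then that of the group
algebra `k[C₃]`, with `a` a generator and `b = a²`, and associativity can be checked on basis
triples. Conversely, the Jordan identity is an instance of associativity.
-/

theorem assoc_of_basis {R M ι : Type*} [CommSemiring R] [AddCommMonoid M] [Module R M]
    (b : Module.Basis ι R M) (mul : M →ₗ[R] M →ₗ[R] M)
    (h : ∀ i j l, mul (mul (b i) (b j)) (b l) = mul (b i) (mul (b j) (b l))) (x y z : M) :
    mul (mul x y) z = mul x (mul y z) := by
  have key : mul.compr₂ mul = ((LinearMap.llcomp R M M M).comp mul).compl₂ mul :=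
    b.ext fun i => b.ext fun j => b.ext fun l => h i j l
  exact congr($key x y z)

theorem assoc_of_cyclic_mul_table {k V : Type*} [CommSemiring k] [AddCommMonoid V]
    [Module k V] (B : Module.Basis (Fin 2) k V) (mul : V →ₗ[k] V →ₗ[k] V)
    (hcomm : ∀ x y : V, mul x y = mul y x)
    (haa : mul (B 0) (B 0) = B 1) (hbb : mul (B 1) (B 1) = B 0)
    (hea : mul (mul (B 0) (B 1)) (B 0) = B 0) (heb : mul (mul (B 0) (B 1)) (B 1) = B 1)
    (x y z : V) : mul (mul x y) z = mul x (mul y z) := by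
  have hba : mul (B 1) (B 0) = mul (B 0) (B 1) := hcomm _ _
  have hae : mul (B 0) (mul (B 0) (B 1)) = B 0 := (hcomm _ _).trans hea
  have hbe : mul (B 1) (mul (B 0) (B 1)) = B 1 := (hcomm _ _).trans heb
  refine assoc_of_basis B mul (fun i j l => ?_) x y z
  fin_cases i <;> fin_cases j <;> fin_cases l <;>
    simp only [Fin.zero_eta, Fin.mk_one, haa, hbb, hba, hea, heb, hae, hbe]

/-- **Theorem 2.1 (Nichita).** Let `V` be a two-dimensional vector space over a field `k`
with basis `{a, b}` (here `a = B 0`, `b = B 1`), and let `mul` be a bilinear commutative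
multiplication on `V` with `a·a = b` and `b·b = a`.  Then `(V, mul)` satisfies the Jordan
identity `((x·x)·y)·x = (x·x)·(y·x)` if and only if `mul` is associative. -/
theorem jordan_iff_associative {k V : Type*} [Field k] [AddCommGroup V] [Module k V]
    (B : Module.Basis (Fin 2) k V) (mul : V →ₗ[k] V →ₗ[k] V)
    (hcomm : ∀ x y : V, mul x y = mul y x)
    (haa : mul (B 0) (B 0) = B 1) (hbb : mul (B 1) (B 1) = B 0) :
    (∀ x y : V, mul (mul (mul x x) y) x = mul (mul x x) (mul y x)) ↔
      (∀ x y z : V, mul (mul x y) z = mul x (mul y z)) := by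
  refine ⟨fun hJ => ?_, fun hA x y => hA (mul x x) y x⟩
  have hea : mul (mul (B 0) (B 1)) (B 0) = B 0 := by
    simpa only [haa, hbb, hcomm (B 1) (B 0)] using hJ (B 0) (B 0)
  have heb : mul (mul (B 0) (B 1)) (B 1) = B 1 := by
    simpa only [haa, hbb] using hJ (B 1) (B 1)
  exact assoc_of_cyclic_mul_table B mul hcomm haa hbb hea heb
end

section
/- Let k be a field, V a two-dimensional k-vector space with basis {e, f}, and β ∈ k with β³ = −1. Define the linear map η : V → V ⊗ V by η(e) = β⁻¹(e ⊗ f + f ⊗ e) + f ⊗ f and η(f) = β(e ⊗ f + f ⊗ e) + e ⊗ e. Then η is cocommutative, i.e. τ ∘ η = η where τ : V ⊗ V → V ⊗ V is the twist map v ⊗ w ↦ w ⊗ v, and η is coassociative, i.e. (η ⊗ I) ∘ η = (I ⊗ η) ∘ η as maps V → V ⊗ V ⊗ V. -/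
/-! Cocommutativity holds because `η(e)` and `η(f)` are symmetric tensors. For
coassociativity, `β³ = -1` gives `β⁻¹ = -β²`, after which the coefficients of the two sides
on `e` and `f` in `V ⊗ V ⊗ V` are polynomials in `β` that agree modulo `β³ + 1`. -/

open TensorProduct

/-- The twist map `τ : V ⊗ V → V ⊗ V`, `v ⊗ w ↦ w ⊗ v`. -/
noncomputable def twist (k V : Type*) [Field k] [AddCommGroup V] [Module k V] :
    V ⊗[k] V →ₗ[k] V ⊗[k] V := (TensorProduct.comm k V V).toLinearMap

theorem inv_eq_neg_sq_of_pow_three_eq_neg_one {K : Type*} [DivisionRing K] {β : K}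
    (hβ : β ^ 3 = -1) : β⁻¹ = -β ^ 2 :=
  inv_eq_of_mul_eq_one_right <| by rw [mul_neg, ← pow_succ', hβ, neg_neg]

section

variable {k V : Type*} [Field k] [AddCommGroup V] [Module k V]
  (B : Module.Basis (Fin 2) k V) {η : V →ₗ[k] V ⊗[k] V}

theorem twist_tmul (v w : V) : twist k V (v ⊗ₜ w) = w ⊗ₜ v := rfl

theorem twist_comp_eq_self_of_apply_basis {a b : k}
    (he : η (B 0) = a • (B 0 ⊗ₜ[k] B 1 + B 1 ⊗ₜ[k] B 0) + B 1 ⊗ₜ[k] B 1)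
    (hf : η (B 1) = b • (B 0 ⊗ₜ[k] B 1 + B 1 ⊗ₜ[k] B 0) + B 0 ⊗ₜ[k] B 0) :
    twist k V ∘ₗ η = η := by
  refine B.ext fun i => ?_
  fin_cases i <;>
  · simp only [Fin.mk_zero, Fin.mk_one, LinearMap.comp_apply, he, hf, map_add, map_smul,
      twist_tmul]
    module

theorem coassoc_of_pow_three_eq_neg_one {β : k} (hβ : β ^ 3 = -1)
    (he : η (B 0) = -β ^ 2 • (B 0 ⊗ₜ[k] B 1 + B 1 ⊗ₜ[k] B 0) + B 1 ⊗ₜ[k] B 1)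
    (hf : η (B 1) = β • (B 0 ⊗ₜ[k] B 1 + B 1 ⊗ₜ[k] B 0) + B 0 ⊗ₜ[k] B 0) :
    (TensorProduct.assoc k V V V).toLinearMap ∘ₗ TensorProduct.map η LinearMap.id ∘ₗ η =
      TensorProduct.map LinearMap.id η ∘ₗ η := by
  refine B.ext fun i => ?_
  fin_cases i <;>
  · simp only [Fin.mk_zero, Fin.mk_one, LinearMap.comp_apply, he, hf, map_add, map_smul,
      map_tmul, tmul_add, add_tmul, smul_tmul, tmul_smul, assoc_tmul, LinearEquiv.coe_coe,
      LinearMap.id_apply]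
    match_scalars <;> grind

end

/-- Let `V` be a two-dimensional vector space over a field `k` with basis `{e, f}`
(`e = B 0`, `f = B 1`) and `β ∈ k` with `β³ = -1`.  The linear map `η : V → V ⊗ V` with
`η(e) = β⁻¹(e ⊗ f + f ⊗ e) + f ⊗ f` and `η(f) = β(e ⊗ f + f ⊗ e) + e ⊗ e` is
cocommutative (`τ ∘ η = η`) and coassociative (`(η ⊗ I) ∘ η = (I ⊗ η) ∘ η` as maps
`V → V ⊗ V ⊗ V`, identifying `(V ⊗ V) ⊗ V ≅ V ⊗ (V ⊗ V)` by the associator). -/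
theorem jordan_coalgebra_cocomm_coassoc {k V : Type*} [Field k] [AddCommGroup V] [Module k V]
    (B : Module.Basis (Fin 2) k V) (β : k) (hβ : β ^ 3 = -1)
    (η : V →ₗ[k] V ⊗[k] V)
    (he : η (B 0) = β⁻¹ • (B 0 ⊗ₜ[k] B 1 + B 1 ⊗ₜ[k] B 0) + B 1 ⊗ₜ[k] B 1)
    (hf : η (B 1) = β • (B 0 ⊗ₜ[k] B 1 + B 1 ⊗ₜ[k] B 0) + B 0 ⊗ₜ[k] B 0) :
    twist k V ∘ₗ η = η ∧
      (TensorProduct.assoc k V V V).toLinearMap ∘ₗ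
          TensorProduct.map η LinearMap.id ∘ₗ η =
        TensorProduct.map LinearMap.id η ∘ₗ η := by
  rw [inv_eq_neg_sq_of_pow_three_eq_neg_one hβ] at he
  exact ⟨twist_comp_eq_self_of_apply_basis B he hf, coassoc_of_pow_three_eq_neg_one B hβ he hf⟩
end

section
/- Let A be a unital associative algebra over a field k with dim A ≥ 2, and let α, β, γ ∈ k. Define the k-linear map R^A_{α,β,γ} : A ⊗ A → A ⊗ A by a ⊗ b ↦ α ab ⊗ 1 + β 1 ⊗ ab − γ a ⊗ b. Then R^A_{α,β,γ} is a Yang–Baxter operator (i.e. invertible and satisfying the braid equation R¹² ∘ R²³ ∘ R¹² = R²³ ∘ R¹² ∘ R²³) if and only if one of the following holds: (i) α = γ ≠ 0 and β ≠ 0; (ii) β = γ ≠ 0 and α ≠ 0; (iii) α = β = 0 and γ ≠ 0. Moreover, in cases (i) and (ii) the inverse is R^A_{1/β, 1/α, 1/γ}, and in case (iii) the inverse is R^A_{0, 0, 1/γ}. -/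
/-!
On pure tensors, `R^A_{α',β',γ'} ∘ R^A_{α,β,γ}` is again of the form `R^A` (`RA_comp`), and it is
the identity as soon as three scalar equations hold; this gives the stated inverses. Conversely,
if `R^A_{α,β,γ}` is injective then `α + β ≠ γ`, since `1 ⊗ 1` is an eigenvector with eigenvalue
`α + β - γ`, and `γ ≠ 0`, since otherwise `v ⊗ 1` and `1 ⊗ v` have the same image for any `v`.
Choosing `v` independent of `1` and functionals biorthogonal to `(1, v)`, evaluating the braid
equation on `v ⊗ 1 ⊗ 1` and on `1 ⊗ 1 ⊗ v` gives `β(β - γ)(γ - α) = 0` and `α(γ - β)(γ - α) = 0`;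
together with the two inequalities these leave exactly cases (i)–(iii), in each of which the
braid equation holds by direct expansion on pure tensors.
-/

open TensorProduct

/-- `R¹² = R ⊗ I` acting on `(V ⊗ V) ⊗ V`. -/
noncomputable def r12 {k V : Type*} [Field k] [AddCommGroup V] [Module k V]
    (R : V ⊗[k] V →ₗ[k] V ⊗[k] V) :
    (V ⊗[k] V) ⊗[k] V →ₗ[k] (V ⊗[k] V) ⊗[k] V :=
  TensorProduct.map R LinearMap.id

/-- `R²³ = I ⊗ R` acting on `(V ⊗ V) ⊗ V`. -/
noncomputable def r23 {k V : Type*} [Field k] [AddCommGroup V] [Module k V]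
    (R : V ⊗[k] V →ₗ[k] V ⊗[k] V) :
    (V ⊗[k] V) ⊗[k] V →ₗ[k] (V ⊗[k] V) ⊗[k] V :=
  (TensorProduct.assoc k V V V).symm.toLinearMap ∘ₗ
    TensorProduct.map LinearMap.id R ∘ₗ (TensorProduct.assoc k V V V).toLinearMap

/-- `I ⊗ τ` acting on `(V ⊗ V) ⊗ V`. -/
noncomputable def iTauI (k V : Type*) [Field k] [AddCommGroup V] [Module k V] :
    (V ⊗[k] V) ⊗[k] V →ₗ[k] (V ⊗[k] V) ⊗[k] V :=
  (TensorProduct.assoc k V V V).symm.toLinearMap ∘ₗ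
    TensorProduct.map LinearMap.id (twist k V) ∘ₗ (TensorProduct.assoc k V V V).toLinearMap

/-- `R¹³ = (I ⊗ τ)(R ⊗ I)(I ⊗ τ)` acting on `(V ⊗ V) ⊗ V`. -/
noncomputable def r13 {k V : Type*} [Field k] [AddCommGroup V] [Module k V]
    (R : V ⊗[k] V →ₗ[k] V ⊗[k] V) :
    (V ⊗[k] V) ⊗[k] V →ₗ[k] (V ⊗[k] V) ⊗[k] V :=
  iTauI k V ∘ₗ r12 R ∘ₗ iTauI k V

/-- The braid equation `R¹² R²³ R¹² = R²³ R¹² R²³`. -/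
noncomputable def BraidEq {k V : Type*} [Field k] [AddCommGroup V] [Module k V]
    (R : V ⊗[k] V →ₗ[k] V ⊗[k] V) : Prop :=
  r12 R ∘ₗ r23 R ∘ₗ r12 R = r23 R ∘ₗ r12 R ∘ₗ r23 R

/-- The map `R^A_{α,β,γ} : A ⊗ A → A ⊗ A`, `a ⊗ b ↦ α ab ⊗ 1 + β 1 ⊗ ab - γ a ⊗ b`. -/
noncomputable def RA (k A : Type*) [Field k] [Ring A] [Algebra k A] (α β γ : k) :
    A ⊗[k] A →ₗ[k] A ⊗[k] A :=
  α • (((TensorProduct.mk k A A).flip 1) ∘ₗ LinearMap.mul' k A) +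
    β • ((TensorProduct.mk k A A 1) ∘ₗ LinearMap.mul' k A) -
    γ • LinearMap.id

section Dual

variable {k V : Type*} [Field k] [AddCommGroup V] [Module k V]

theorem Module.exists_dual_eq_one_eq_zero {x y : V} (h : x ∉ Submodule.span k {y}) :
    ∃ f : Module.Dual k V, f x = 1 ∧ f y = 0 := by
  obtain ⟨f, hfx, hf⟩ := Submodule.exists_dual_map_eq_bot_of_notMem h inferInstance
  have hfy : f y ∈ (⊥ : Submodule k k) :=
    hf ▸ Submodule.mem_map_of_mem (Submodule.mem_span_singleton_self y)
  exact ⟨(f x)⁻¹ • f, by simp [hfx], by simp [(Submodule.mem_bot k).1 hfy]⟩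

theorem LinearIndependent.notMem_span_singleton_of_pair {x y : V}
    (h : LinearIndependent k ![x, y]) : x ∉ Submodule.span k {y} := by
  rw [Submodule.mem_span_singleton]
  rintro ⟨a, rfl⟩
  simpa using (LinearIndependent.pair_iff.1 h 1 (-a) (by simp)).1

theorem Module.exists_biorthogonal_of_one_lt_rank (h : 1 < Module.rank k V) {x : V}
    (hx : x ≠ 0) :
    ∃ (y : V) (f g : Module.Dual k V), f x = 1 ∧ f y = 0 ∧ g x = 0 ∧ g y = 1 := by
  obtain ⟨y, hxy⟩ := exists_linearIndependent_pair_of_one_lt_rank h hx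
  obtain ⟨f, hfx, hfy⟩ :=
    Module.exists_dual_eq_one_eq_zero hxy.notMem_span_singleton_of_pair
  obtain ⟨g, hgy, hgx⟩ := Module.exists_dual_eq_one_eq_zero
    (LinearIndependent.pair_symm_iff.1 hxy).notMem_span_singleton_of_pair
  exact ⟨y, f, g, hfx, hfy, hgx, hgy⟩

end Dual

section Braid

variable {k V : Type*} [Field k] [AddCommGroup V] [Module k V]

@[simp]
theorem r12_tmul (R : V ⊗[k] V →ₗ[k] V ⊗[k] V) (a b c : V) :
    r12 R ((a ⊗ₜ b) ⊗ₜ c) = R (a ⊗ₜ b) ⊗ₜ c :=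
  rfl

@[simp]
theorem r23_tmul (R : V ⊗[k] V →ₗ[k] V ⊗[k] V) (a b c : V) :
    r23 R ((a ⊗ₜ b) ⊗ₜ c) = (TensorProduct.assoc k V V V).symm (a ⊗ₜ R (b ⊗ₜ c)) :=
  rfl

end Braid

section RA

variable {k A : Type*} [Field k] [Ring A] [Algebra k A]

@[simp]
theorem RA_tmul (α β γ : k) (a b : A) :
    RA k A α β γ (a ⊗ₜ b) = α • (a * b) ⊗ₜ 1 + β • (1 : A) ⊗ₜ (a * b) - γ • a ⊗ₜ b := by
  simp [RA]

theorem RA_zero_zero_neg_one : RA k A 0 0 (-1) = LinearMap.id := by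
  ext a b
  simp

theorem RA_comp (α β γ α' β' γ' : k) :
    RA k A α' β' γ' ∘ₗ RA k A α β γ =
      RA k A (α' * (α + β - γ) - γ' * α) (β' * (α + β - γ) - γ' * β) (-(γ * γ')) := by
  ext a b
  simp only [TensorProduct.AlgebraTensorModule.curry_apply, LinearMap.restrictScalars_self,
    TensorProduct.curry_apply, LinearMap.comp_apply, RA_tmul, map_add, map_sub, map_smul,
    mul_one, one_mul]
  module

theorem RA_comp_eq_id {α β γ α' β' γ' : k} (hα : α' * (α + β - γ) = γ' * α)
    (hβ : β' * (α + β - γ) = γ' * β) (hγ : γ * γ' = 1) :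
    RA k A α' β' γ' ∘ₗ RA k A α β γ = LinearMap.id := by
  rw [RA_comp, hα, hβ, hγ, sub_self, sub_self, RA_zero_zero_neg_one]

theorem RA_one_tmul_one (α β γ : k) :
    RA k A α β γ (1 ⊗ₜ 1) = (α + β - γ) • (1 : A) ⊗ₜ[k] (1 : A) := by
  simp only [RA_tmul, mul_one]
  module

theorem add_ne_of_injective_RA [Nontrivial A] {α β γ : k}
    (h : Function.Injective (RA k A α β γ)) : α + β ≠ γ := by
  intro hγ
  have h0 : (1 : A) ⊗ₜ[k] (1 : A) = 0 :=
    h (by rw [RA_one_tmul_one, hγ, sub_self, zero_smul, map_zero])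
  exact one_ne_zero (Algebra.TensorProduct.one_def.trans h0)

theorem exists_dual_biorthogonal_one (hA : 1 < Module.rank k A) :
    ∃ (v : A) (f g : Module.Dual k A), f 1 = 1 ∧ f v = 0 ∧ g 1 = 0 ∧ g v = 1 :=
  have : Nontrivial A := rank_pos_iff_nontrivial.1 (zero_lt_one.trans hA)
  Module.exists_biorthogonal_of_one_lt_rank hA one_ne_zero

theorem ne_zero_of_injective_RA (hA : 1 < Module.rank k A) {α β γ : k}
    (h : Function.Injective (RA k A α β γ)) : γ ≠ 0 := by
  obtain ⟨v, f, g, hf1, hfv, hg1, hgv⟩ := exists_dual_biorthogonal_one hA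
  rintro rfl
  have hv : v ⊗ₜ[k] (1 : A) = 1 ⊗ₜ v := h (by simp)
  simpa [hf1, hfv, hg1, hgv] using congr(dualDistrib k A A (g ⊗ₜ f) $hv)

theorem braidEq_RA {α β γ : k} (h : α = γ ∨ β = γ ∨ α = 0 ∧ β = 0) :
    BraidEq (RA k A α β γ) := by
  refine ext_threefold fun a b c => ?_
  rcases h with rfl | rfl | ⟨rfl, rfl⟩ <;>
  simp only [LinearMap.comp_apply, r12_tmul, r23_tmul, RA_tmul, map_add, map_sub, map_smul,
    add_tmul, sub_tmul, tmul_add, tmul_sub, smul_tmul, tmul_smul,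
    assoc_symm_tmul, mul_one, one_mul, mul_assoc] <;>
  module

theorem eq_zero_of_braidEq_RA (hA : 1 < Module.rank k A) {α β γ : k}
    (h : BraidEq (RA k A α β γ)) :
    β * (β - γ) * (γ - α) = 0 ∧ α * (γ - β) * (γ - α) = 0 := by
  obtain ⟨v, f, g, hf1, hfv, hg1, hgv⟩ := exists_dual_biorthogonal_one hA
  have E1 := congr(dualDistrib k _ _ (dualDistrib k A A (g ⊗ₜ f) ⊗ₜ f)
    $(LinearMap.congr_fun h ((v ⊗ₜ[k] (1 : A)) ⊗ₜ[k] (1 : A))))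
  have E2 := congr(dualDistrib k _ _ (dualDistrib k A A (f ⊗ₜ f) ⊗ₜ g)
    $(LinearMap.congr_fun h (((1 : A) ⊗ₜ[k] (1 : A)) ⊗ₜ[k] v)))
  simp only [LinearMap.comp_apply, r12_tmul, r23_tmul, RA_tmul, map_add, map_sub, map_smul,
    add_tmul, sub_tmul, tmul_add, tmul_sub, smul_tmul, tmul_smul,
    assoc_symm_tmul, mul_one, one_mul,
    dualDistrib_apply, hf1, hfv, hg1, hgv, smul_eq_mul, mul_zero] at E1 E2
  exact ⟨by linear_combination E1, by linear_combination E2⟩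

end RA

/-- **Theorem (Dăscălescu–Nichita).** For a unital associative `k`-algebra `A` with
`dim A ≥ 2`, the map `R^A_{α,β,γ}` is a Yang–Baxter operator (invertible and satisfying
the braid equation) iff (i) `α = γ ≠ 0, β ≠ 0`, or (ii) `β = γ ≠ 0, α ≠ 0`, or
(iii) `α = β = 0, γ ≠ 0`; in cases (i), (ii) the inverse is `R^A_{1/β, 1/α, 1/γ}`, and
in case (iii) the inverse is `R^A_{0, 0, 1/γ}`. -/
theorem RA_yang_baxter_iff {k A : Type*} [Field k] [Ring A] [Algebra k A]
    (hdim : 2 ≤ Module.rank k A) (α β γ : k) :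
    ((Function.Bijective (RA k A α β γ) ∧ BraidEq (RA k A α β γ)) ↔
      ((α = γ ∧ γ ≠ 0 ∧ β ≠ 0) ∨ (β = γ ∧ γ ≠ 0 ∧ α ≠ 0) ∨
        (α = 0 ∧ β = 0 ∧ γ ≠ 0))) ∧
    (((α = γ ∧ γ ≠ 0 ∧ β ≠ 0) ∨ (β = γ ∧ γ ≠ 0 ∧ α ≠ 0)) →
      RA k A β⁻¹ α⁻¹ γ⁻¹ ∘ₗ RA k A α β γ = LinearMap.id ∧
        RA k A α β γ ∘ₗ RA k A β⁻¹ α⁻¹ γ⁻¹ = LinearMap.id) ∧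
    ((α = 0 ∧ β = 0 ∧ γ ≠ 0) →
      RA k A 0 0 γ⁻¹ ∘ₗ RA k A α β γ = LinearMap.id ∧
        RA k A α β γ ∘ₗ RA k A 0 0 γ⁻¹ = LinearMap.id) := by
  have hA : 1 < Module.rank k A := Cardinal.one_lt_two.trans_le hdim
  have : Nontrivial A := rank_pos_iff_nontrivial.1 (zero_lt_one.trans hA)
  have inv₁₂ : ((α = γ ∧ γ ≠ 0 ∧ β ≠ 0) ∨ (β = γ ∧ γ ≠ 0 ∧ α ≠ 0)) →
      RA k A β⁻¹ α⁻¹ γ⁻¹ ∘ₗ RA k A α β γ = LinearMap.id ∧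
        RA k A α β γ ∘ₗ RA k A β⁻¹ α⁻¹ γ⁻¹ = LinearMap.id := by
    rintro (⟨rfl, hγ, hβ⟩ | ⟨rfl, hγ, hα⟩) <;> constructor <;> apply RA_comp_eq_id <;>
      field_simp <;> ring
  have inv₃ : (α = 0 ∧ β = 0 ∧ γ ≠ 0) →
      RA k A 0 0 γ⁻¹ ∘ₗ RA k A α β γ = LinearMap.id ∧
        RA k A α β γ ∘ₗ RA k A 0 0 γ⁻¹ = LinearMap.id := by
    rintro ⟨rfl, rfl, hγ⟩
    constructor <;> apply RA_comp_eq_id <;> simp [hγ]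
  refine ⟨⟨fun ⟨hbij, hbraid⟩ => ?_, fun h => ⟨?_, braidEq_RA (by tauto)⟩⟩, inv₁₂, inv₃⟩
  · have hγ := ne_zero_of_injective_RA hA hbij.1
    have hsum := add_ne_of_injective_RA hbij.1
    obtain ⟨h₁, h₂⟩ := eq_zero_of_braidEq_RA hA hbraid
    grind
  · obtain ⟨R', hL, hR⟩ : ∃ R', R' ∘ₗ RA k A α β γ = LinearMap.id ∧
        RA k A α β γ ∘ₗ R' = LinearMap.id := by
      rcases h with h | h | h
      exacts [⟨_, inv₁₂ (.inl h)⟩, ⟨_, inv₁₂ (.inr h)⟩, ⟨_, inv₃ h⟩]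
    exact Function.bijective_iff_has_inverse.2
      ⟨R', LinearMap.congr_fun hL, LinearMap.congr_fun hR⟩
end

section
/- Let A be a unital associative algebra over ℝ with dim A ≥ 2, and let q ∈ ℝ. For λ ∈ ℝ define the linear map S(λ) : A ⊗ A → A ⊗ A by S(λ)(a ⊗ b) = (e^λ − 1) 1 ⊗ ab + q(e^λ − 1) ab ⊗ 1 − (e^λ − q) b ⊗ a. Then S satisfies the one-parameter form of the Yang–Baxter equation: S¹²(λ₁ − λ₂) ∘ S¹³(λ₁ − λ₃) ∘ S²³(λ₂ − λ₃) = S²³(λ₂ − λ₃) ∘ S¹³(λ₁ − λ₃) ∘ S¹²(λ₁ − λ₂) for all λ₁, λ₂, λ₃ ∈ ℝ. -/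
open TensorProduct

/-- The operator `S(λ) : A ⊗ A → A ⊗ A`,
`a ⊗ b ↦ (e^λ − 1) 1 ⊗ ab + q(e^λ − 1) ab ⊗ 1 − (e^λ − q) b ⊗ a`. -/
noncomputable def Sop (A : Type*) [Ring A] [Algebra ℝ A] (q lam : ℝ) :
    A ⊗[ℝ] A →ₗ[ℝ] A ⊗[ℝ] A :=
  (Real.exp lam - 1) • ((TensorProduct.mk ℝ A A 1) ∘ₗ LinearMap.mul' ℝ A) +
    (q * (Real.exp lam - 1)) • (((TensorProduct.mk ℝ A A).flip 1) ∘ₗ LinearMap.mul' ℝ A) -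
    (Real.exp lam - q) • twist ℝ A

/-- **Theorem (Nichita–Popovici).** For a unital associative `ℝ`-algebra `A` with
`dim A ≥ 2` and `q ∈ ℝ`, the operator
`S(λ)(a ⊗ b) = (e^λ − 1) 1 ⊗ ab + q(e^λ − 1) ab ⊗ 1 − (e^λ − q) b ⊗ a`
satisfies the one-parameter form of the Yang–Baxter equation. -/
theorem Sop_one_parameter_ybe {A : Type*} [Ring A] [Algebra ℝ A]
    (hdim : 2 ≤ Module.rank ℝ A) (q : ℝ) :
    ∀ lam₁ lam₂ lam₃ : ℝ,
      r12 (Sop A q (lam₁ - lam₂)) ∘ₗ r13 (Sop A q (lam₁ - lam₃)) ∘ₗ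
          r23 (Sop A q (lam₂ - lam₃)) =
        r23 (Sop A q (lam₂ - lam₃)) ∘ₗ r13 (Sop A q (lam₁ - lam₃)) ∘ₗ
          r12 (Sop A q (lam₁ - lam₂)) := by
  intro lam₁ lam₂ lam₃
  apply TensorProduct.ext_threefold
  intro a b c
  have h13 : lam₁ - lam₃ = (lam₁ - lam₂) + (lam₂ - lam₃) := by ring
  simp only [Sop, r12, r13, r23, twist, iTauI, LinearMap.comp_apply,
    LinearMap.coe_comp, Function.comp_apply, LinearEquiv.coe_coe,
    TensorProduct.assoc_tmul, TensorProduct.assoc_symm_tmul,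
    TensorProduct.map_tmul, TensorProduct.comm_tmul, TensorProduct.mk_apply,
    LinearMap.flip_apply, LinearMap.mul'_apply, LinearMap.id_coe, id_eq,
    LinearMap.add_apply, LinearMap.sub_apply, LinearMap.smul_apply,
    map_add, map_sub, map_smul,
    TensorProduct.tmul_add, TensorProduct.add_tmul, TensorProduct.tmul_sub,
    TensorProduct.sub_tmul, TensorProduct.tmul_smul, TensorProduct.smul_tmul',
    h13, Real.exp_add, one_mul, mul_one]
  generalize Real.exp (lam₁ - lam₂) = x
  generalize Real.exp (lam₂ - lam₃) = y
  simp only [smul_mul_assoc, mul_smul_comm, TensorProduct.tmul_smul,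
    ← TensorProduct.smul_tmul', smul_smul, mul_assoc, one_mul, mul_one]
  module
end
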